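/- arXiv:2603.23621 — 5 statements merged into one kernel-verified Lean document; each statement's English description precedes it below -/
import Mathlib

section
/- Let d ≥ 2 be a natural number and 1 < α < 2 a real number. For every p ∈ (1, ∞), one has κ_{(d−α)/p} ≤ κ_{(d−α)/2}; that is, κ_{(d−α)/2} = max over p ∈ (1,∞) of κ_{(d−α)/p}. -/
/-!
Writing `v = α / 2` and `γ = d - α - β`, the relation `Γ(x + v) / Γ(x) = Γ(v) / B(x, v)` turns
`κ_β` into `2^α Γ(v)^2 / (B(β/2, v) B(γ/2, v))`. As `β` ranges over `(0, d - α)` the sum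
`β/2 + γ/2 = (d - α)/2` is fixed, so by log-convexity of `x ↦ B(x, v)` (Hölder's inequality in
the Euler integral) the denominator is smallest at `β = γ = (d - α)/2`, i.e. for `p = 2`.
-/

/-- `κ_β := 2^α Γ((β+α)/2) Γ((d−β)/2) / (Γ(β/2) Γ((d−β−α)/2))`. -/
noncomputable def kappa (d : ℕ) (α β : ℝ) : ℝ :=
  2 ^ α * Real.Gamma ((β + α) / 2) * Real.Gamma (((d : ℝ) - β) / 2) /
    (Real.Gamma (β / 2) * Real.Gamma (((d : ℝ) - β - α) / 2))

open Real MeasureTheory Set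

namespace ProbabilityTheory

lemma integrableOn_rpow_mul_one_sub_rpow {a b : ℝ} (ha : 0 < a) (hb : 0 < b) :
    IntegrableOn (fun x : ℝ => x ^ (a - 1) * (1 - x) ^ (b - 1)) (Ioo 0 1) := by
  have hc : IntegrableOn (fun x : ℝ => (x : ℂ) ^ ((a : ℂ) - 1) * (1 - x) ^ ((b : ℂ) - 1))
      (Ioc 0 1) := (Complex.betaIntegral_convergent (by simpa) (by simpa)).1
  refine IntegrableOn.congr_fun (hc.mono_set Ioo_subset_Ioc_self).re (fun x hx => ?_)
    measurableSet_Ioo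
  have h1x : 0 ≤ 1 - x := by linarith [hx.2]
  rw [show ((1 : ℂ) - x) = ((1 - x : ℝ) : ℂ) by push_cast; ring,
    show (a : ℂ) - 1 = ((a - 1 : ℝ) : ℂ) by push_cast; ring,
    show (b : ℂ) - 1 = ((b - 1 : ℝ) : ℂ) by push_cast; ring,
    ← Complex.ofReal_cpow hx.1.le, ← Complex.ofReal_cpow h1x, ← Complex.ofReal_mul]
  rfl

lemma beta_eq_integral {a b : ℝ} (ha : 0 < a) (hb : 0 < b) :
    beta a b = ∫ x in Ioo (0 : ℝ) 1, x ^ (a - 1) * (1 - x) ^ (b - 1) := by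
  have h : Complex.betaIntegral a b =
      ((∫ x in (0 : ℝ)..1, x ^ (a - 1) * (1 - x) ^ (b - 1) : ℝ) : ℂ) := by
    rw [Complex.betaIntegral, ← intervalIntegral.integral_ofReal]
    refine intervalIntegral.integral_congr fun x hx => ?_
    rw [uIcc_of_le zero_le_one] at hx
    rw [Complex.ofReal_mul, Complex.ofReal_cpow hx.1, Complex.ofReal_cpow (by linarith [hx.2])]
    push_cast
    ring
  rw [beta_eq_betaIntegralReal a b ha hb, h, Complex.ofReal_re,
    intervalIntegral.integral_of_le zero_le_one, integral_Ioc_eq_integral_Ioo]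

theorem beta_mul_add_mul_le_rpow_beta_mul_rpow_beta {s t v a b : ℝ} (hs : 0 < s) (ht : 0 < t)
    (hv : 0 < v) (ha : 0 < a) (hb : 0 < b) (hab : a + b = 1) :
    beta (a * s + b * t) v ≤ beta s v ^ a * beta t v ^ b := by
  -- Hölder with the conjugate exponents `1 / a`, `1 / b` applied to `f a s` and `f b t`
  let f : ℝ → ℝ → ℝ → ℝ := fun c u x => x ^ (c * (u - 1)) * (1 - x) ^ (c * (v - 1))
  have f_nonneg : ∀ c u, ∀ x ∈ Ioo (0 : ℝ) 1, 0 ≤ f c u x := fun c u x hx =>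
    mul_nonneg (rpow_nonneg hx.1.le _) (rpow_nonneg (sub_nonneg.2 hx.2.le) _)
  have f_rpow : ∀ {c : ℝ}, 0 < c → ∀ u, ∀ x ∈ Ioo (0 : ℝ) 1,
      f c u x ^ (1 / c) = x ^ (u - 1) * (1 - x) ^ (v - 1) := by
    intro c hc u x hx
    rw [mul_rpow (rpow_nonneg hx.1.le _) (rpow_nonneg (sub_nonneg.2 hx.2.le) _),
      ← rpow_mul hx.1.le, ← rpow_mul (sub_nonneg.2 hx.2.le)]
    congr 2 <;> field
  have f_memLp : ∀ {c u : ℝ}, 0 < c → 0 < u →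
      MemLp (f c u) (ENNReal.ofReal (1 / c)) (volume.restrict (Ioo 0 1)) := by
    intro c u hc hu
    have h0 : ENNReal.ofReal (1 / c) ≠ 0 := by positivity
    rw [← memLp_norm_rpow_iff _ h0 ENNReal.ofReal_ne_top,
      ENNReal.toReal_ofReal (by positivity), ENNReal.div_self h0 ENNReal.ofReal_ne_top,
      memLp_one_iff_integrable]
    · refine (integrableOn_rpow_mul_one_sub_rpow hu hv).congr_fun (fun x hx => ?_)
        measurableSet_Ioo
      rw [norm_of_nonneg (f_nonneg c u x hx), f_rpow hc u x hx]
    · refine ContinuousOn.aestronglyMeasurable ?_ measurableSet_Ioo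
      exact ((continuousOn_id.rpow_const fun x hx => .inl hx.1.ne').mul
        ((continuousOn_const.sub continuousOn_id).rpow_const
          fun x hx => .inl (sub_pos.2 hx.2).ne'))
  have holder := integral_mul_le_Lp_mul_Lq_of_nonneg (holderConjugate_one_div ha hb hab)
    (ae_restrict_of_forall_mem measurableSet_Ioo (f_nonneg a s))
    (ae_restrict_of_forall_mem measurableSet_Ioo (f_nonneg b t)) (f_memLp ha hs) (f_memLp hb ht)
  rw [beta_eq_integral hs hv, beta_eq_integral ht hv, beta_eq_integral (by positivity) hv]
  convert holder using 1
  · refine setIntegral_congr_fun measurableSet_Ioo fun x hx => ?_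
    have h1x := sub_pos.2 hx.2
    rw [← mul_mul_mul_comm, ← rpow_add hx.1, ← rpow_add h1x, ← add_mul, hab, one_mul]
    congr 2; linear_combination hab
  · rw [one_div_one_div, one_div_one_div]
    congr 2 <;> exact (setIntegral_congr_fun measurableSet_Ioo fun x hx => f_rpow ‹_› _ x hx).symm

lemma beta_midpoint_sq_le {s t v : ℝ} (hs : 0 < s) (ht : 0 < t) (hv : 0 < v) :
    beta ((s + t) / 2) v ^ 2 ≤ beta s v * beta t v := by
  have h := beta_mul_add_mul_le_rpow_beta_mul_rpow_beta hs ht hv (a := 1 / 2) (b := 1 / 2)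
    (by norm_num) (by norm_num) (by norm_num)
  calc beta ((s + t) / 2) v ^ 2 ≤ (beta s v ^ (1 / 2 : ℝ) * beta t v ^ (1 / 2 : ℝ)) ^ 2 := by
        gcongr
        · exact (beta_pos (by positivity) hv).le
        · rwa [show 1 / 2 * s + 1 / 2 * t = (s + t) / 2 by ring] at h
    _ = beta s v * beta t v := by
        rw [mul_pow, ← sqrt_eq_rpow, ← sqrt_eq_rpow, sq_sqrt (beta_pos hs hv).le,
          sq_sqrt (beta_pos ht hv).le]

end ProbabilityTheory

open ProbabilityTheory

lemma kappa_eq_div_beta_mul_beta {d : ℕ} {α β : ℝ} (hα : 0 < α) (hβ : 0 < β)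
    (hβα : 0 < (d : ℝ) - β - α) :
    kappa d α β = 2 ^ α * Gamma (α / 2) ^ 2 /
      (beta (β / 2) (α / 2) * beta (((d : ℝ) - β - α) / 2) (α / 2)) := by
  have h1 : (β + α) / 2 = β / 2 + α / 2 := by ring
  have h2 : ((d : ℝ) - β) / 2 = ((d : ℝ) - β - α) / 2 + α / 2 := by ring
  have := Gamma_pos_of_pos (half_pos hα)
  have := Gamma_pos_of_pos (half_pos hβ)
  have := Gamma_pos_of_pos (half_pos hβα)
  have := Gamma_pos_of_pos (add_pos (half_pos hβ) (half_pos hα))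
  have := Gamma_pos_of_pos (add_pos (half_pos hβα) (half_pos hα))
  rw [kappa, beta, beta, h1, h2]
  field_simp

/-- For every `p ∈ (1, ∞)`, `κ_{(d−α)/p} ≤ κ_{(d−α)/2}`:
`κ_{(d−α)/2}` is the maximum of `κ_{(d−α)/p}` over `p ∈ (1,∞)`. -/
theorem stmt_6 (d : ℕ) (hd : 2 ≤ d) (α : ℝ) (hα1 : 1 < α) (hα2 : α < 2)
    (p : ℝ) (hp : 1 < p) :
    kappa d α (((d : ℝ) - α) / p) ≤ kappa d α (((d : ℝ) - α) / 2) := by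
  have hα : 0 < α := by linarith
  have hdα : 0 < (d : ℝ) - α := by
    have : (2 : ℝ) ≤ d := by exact_mod_cast hd
    linarith
  set β := ((d : ℝ) - α) / p
  set c := ((d : ℝ) - α) / 2
  have hβ : 0 < β := div_pos hdα (by linarith)
  have hβα : 0 < (d : ℝ) - β - α := by linarith [div_lt_self hdα hp]
  have hc : 0 < c := half_pos hdα
  have hcα : (d : ℝ) - c - α = c := by ring
  have key := beta_midpoint_sq_le (half_pos hβ) (half_pos hβα) (half_pos hα)
  rw [show (β / 2 + ((d : ℝ) - β - α) / 2) / 2 = c / 2 by ring, sq] at key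
  rw [kappa_eq_div_beta_mul_beta hα hβ hβα,
    kappa_eq_div_beta_mul_beta hα hc (hcα.symm ▸ hc), hcα]
  gcongr 2 ^ α * Gamma (α / 2) ^ 2 / ?_
  exact mul_self_pos.2 (beta_pos (half_pos hc) (half_pos hα)).ne'
end

section
/- Let d ≥ 2 be a natural number and 1 < α < 2 a real number. For every p ∈ (1, ∞) with p ≠ 2, one has the strict inequality (4(p−1)/p²) κ_{(d−α)/2} < κ_{(d−α)/p}. -/
open Real Filter Finset Topology

private lemma fact_lt' (x y δ t : ℝ) (hδ : 0 < δ) (hxy : x ≠ y) (hx : 0 < x + t)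
    (hy : 0 < y + t) :
    (x+t)*(y+t)*((x+y)/2+δ+t)^2 < (x+δ+t)*(y+δ+t)*((x+y)/2+t)^2 := by
  have hne : x - y ≠ 0 := sub_ne_zero.mpr hxy
  have h1 : 0 < (x-y)^2 := by positivity
  nlinarith [mul_pos (mul_pos h1 hδ) (by linarith : (0:ℝ) < (x+t)+(y+t)+δ)]

private lemma gs_pos' {s : ℝ} (hs : 0 < s) {n : ℕ} (hn : 1 ≤ n) : 0 < Real.GammaSeq s n := by
  have hN : (0:ℝ) < n := by exact_mod_cast hn
  unfold Real.GammaSeq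
  apply div_pos
  · exact mul_pos (rpow_pos_of_pos hN s) (by exact_mod_cast n.factorial_pos)
  · exact Finset.prod_pos fun j _ => by positivity

/-- Strict log-convexity of `x ↦ Γ(x)/Γ(x+δ)`, midpoint form. -/
private lemma gamma_core (x y δ : ℝ) (hx : 0 < x) (hy : 0 < y) (hδ : 0 < δ) (hxy : x ≠ y) :
    Real.Gamma (x+δ) * Real.Gamma (y+δ) * Real.Gamma ((x+y)/2) ^ 2 <
      Real.Gamma x * Real.Gamma y * Real.Gamma ((x+y)/2 + δ) ^ 2 := by
  set c : ℝ := (x+y)/2 with hc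
  have hcpos : 0 < c := by rw [hc]; linarith
  set L : ℕ → ℝ := fun j => (x+j)*(y+j)*(c+δ+j)^2 with hL
  set R : ℕ → ℝ := fun j => (x+δ+j)*(y+δ+j)*(c+j)^2 with hR
  have hLpos : ∀ j : ℕ, 0 < L j := fun j => by
    have : (0:ℝ) ≤ j := Nat.cast_nonneg j
    simp only [hL]; positivity
  have hRpos : ∀ j : ℕ, 0 < R j := fun j => by
    have : (0:ℝ) ≤ j := Nat.cast_nonneg j
    simp only [hR]; positivity
  have hLR : ∀ j : ℕ, L j < R j := fun j => by
    have hj : (0:ℝ) ≤ j := Nat.cast_nonneg j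
    simp only [hL, hR, hc]
    exact fact_lt' x y δ j hδ hxy (by linarith) (by linarith)
  have prodLR : ∀ n : ℕ, R 0 * ∏ j ∈ range (n+1), L j ≤ L 0 * ∏ j ∈ range (n+1), R j := by
    intro n
    rw [Finset.prod_range_succ' L, Finset.prod_range_succ' R]
    have h1 : ∏ j ∈ range n, L (j+1) ≤ ∏ j ∈ range n, R (j+1) :=
      Finset.prod_le_prod (fun j _ => (hLpos (j+1)).le) (fun j _ => (hLR (j+1)).le)
    have h2 : 0 < L 0 * R 0 := mul_pos (hLpos 0) (hRpos 0)
    calc R 0 * ((∏ j ∈ range n, L (j+1)) * L 0)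
        = (L 0 * R 0) * ∏ j ∈ range n, L (j+1) := by ring
      _ ≤ (L 0 * R 0) * ∏ j ∈ range n, R (j+1) := mul_le_mul_of_nonneg_left h1 h2.le
      _ = L 0 * ((∏ j ∈ range n, R (j+1)) * R 0) := by ring
  have hid : ∀ n : ℕ, 1 ≤ n →
      (Real.GammaSeq (x+δ) n * Real.GammaSeq (y+δ) n * Real.GammaSeq c n ^ 2) *
        ∏ j ∈ range (n+1), R j =
      (Real.GammaSeq x n * Real.GammaSeq y n * Real.GammaSeq (c+δ) n ^ 2) *
        ∏ j ∈ range (n+1), L j := by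
    intro n hn
    have hN : (0:ℝ) < n := by exact_mod_cast hn
    have hprod : ∀ s : ℝ, 0 < s → (0:ℝ) < ∏ j ∈ range (n+1), (s + j) :=
      fun s hs => Finset.prod_pos fun j _ => by positivity
    have hPx := (hprod x hx).ne'
    have hPy := (hprod y hy).ne'
    have hPc := (hprod c hcpos).ne'
    have hPxd := (hprod (x+δ) (by linarith)).ne'
    have hPyd := (hprod (y+δ) (by linarith)).ne'
    have hPcd := (hprod (c+δ) (by linarith)).ne'
    have hRsplit : ∏ j ∈ range (n+1), R j =
        (∏ j ∈ range (n+1), (x+δ+j)) * (∏ j ∈ range (n+1), (y+δ+j)) *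
          (∏ j ∈ range (n+1), (c+j)) ^ 2 := by
      simp only [hR]
      rw [Finset.prod_mul_distrib, Finset.prod_mul_distrib, Finset.prod_pow]
    have hLsplit : ∏ j ∈ range (n+1), L j =
        (∏ j ∈ range (n+1), (x+j)) * (∏ j ∈ range (n+1), (y+j)) *
          (∏ j ∈ range (n+1), (c+δ+j)) ^ 2 := by
      simp only [hL]
      rw [Finset.prod_mul_distrib, Finset.prod_mul_distrib, Finset.prod_pow]
    rw [hRsplit, hLsplit]
    unfold Real.GammaSeq
    rw [Real.rpow_add hN x δ, Real.rpow_add hN y δ, Real.rpow_add hN c δ]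
    field_simp
  set A : ℕ → ℝ := fun n =>
    Real.GammaSeq (x+δ) n * Real.GammaSeq (y+δ) n * Real.GammaSeq c n ^ 2 with hAdef
  set B : ℕ → ℝ := fun n =>
    Real.GammaSeq x n * Real.GammaSeq y n * Real.GammaSeq (c+δ) n ^ 2 with hBdef
  have hAt : Tendsto (fun n => R 0 * A n) atTop
      (𝓝 (R 0 * (Real.Gamma (x+δ) * Real.Gamma (y+δ) * Real.Gamma c ^ 2))) :=
    (((Real.GammaSeq_tendsto_Gamma (x+δ)).mul (Real.GammaSeq_tendsto_Gamma (y+δ))).mul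
      ((Real.GammaSeq_tendsto_Gamma c).pow 2)).const_mul (R 0)
  have hBt : Tendsto (fun n => L 0 * B n) atTop
      (𝓝 (L 0 * (Real.Gamma x * Real.Gamma y * Real.Gamma (c+δ) ^ 2))) :=
    (((Real.GammaSeq_tendsto_Gamma x).mul (Real.GammaSeq_tendsto_Gamma y)).mul
      ((Real.GammaSeq_tendsto_Gamma (c+δ)).pow 2)).const_mul (L 0)
  have hev : ∀ᶠ n in atTop, R 0 * A n ≤ L 0 * B n := by
    filter_upwards [eventually_ge_atTop 1] with n hn
    have hApos : 0 < A n := mul_pos (mul_pos (gs_pos' (by linarith) hn)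
      (gs_pos' (by linarith) hn)) (pow_pos (gs_pos' hcpos hn) 2)
    have hPL : 0 < ∏ j ∈ range (n+1), L j := Finset.prod_pos fun j _ => hLpos j
    have key : (R 0 * A n) * ∏ j ∈ range (n+1), L j
        ≤ (L 0 * B n) * ∏ j ∈ range (n+1), L j := by
      calc (R 0 * A n) * ∏ j ∈ range (n+1), L j
          = A n * (R 0 * ∏ j ∈ range (n+1), L j) := by ring
        _ ≤ A n * (L 0 * ∏ j ∈ range (n+1), R j) :=
            mul_le_mul_of_nonneg_left (prodLR n) hApos.le
        _ = L 0 * (A n * ∏ j ∈ range (n+1), R j) := by ring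
        _ = L 0 * (B n * ∏ j ∈ range (n+1), L j) := by rw [hid n hn]
        _ = (L 0 * B n) * ∏ j ∈ range (n+1), L j := by ring
    exact le_of_mul_le_mul_right key hPL
  have hle : R 0 * (Real.Gamma (x+δ) * Real.Gamma (y+δ) * Real.Gamma c ^ 2) ≤
      L 0 * (Real.Gamma x * Real.Gamma y * Real.Gamma (c+δ) ^ 2) :=
    le_of_tendsto_of_tendsto hAt hBt hev
  have hG1 : 0 < Real.Gamma (x+δ) * Real.Gamma (y+δ) * Real.Gamma c ^ 2 :=
    mul_pos (mul_pos (Real.Gamma_pos_of_pos (by linarith)) (Real.Gamma_pos_of_pos (by linarith)))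
      (pow_pos (Real.Gamma_pos_of_pos hcpos) 2)
  nlinarith [hLR 0, hRpos 0, hLpos 0]

/-- For `p ∈ (1,∞)`, `p ≠ 2`: `(4(p−1)/p²) κ_{(d−α)/2} < κ_{(d−α)/p}`. -/
theorem stmt_7 (d : ℕ) (hd : 2 ≤ d) (α : ℝ) (hα1 : 1 < α) (hα2 : α < 2)
    (p : ℝ) (hp : 1 < p) (hp2 : p ≠ 2) :
    4 * (p - 1) / p ^ 2 * kappa d α (((d : ℝ) - α) / 2) <
      kappa d α (((d : ℝ) - α) / p) := by
  have hd2 : (2:ℝ) ≤ (d:ℝ) := by exact_mod_cast hd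
  have hp0 : (0:ℝ) < p := by linarith
  have hdα : 0 < (d:ℝ) - α := by linarith
  set β : ℝ := ((d:ℝ) - α)/p with hβdef
  have hβpos : 0 < β := div_pos hdα hp0
  have hβlt : β < (d:ℝ) - α := div_lt_self hdα hp
  have hβne : β ≠ ((d:ℝ) - α)/2 := by
    rw [hβdef]
    intro h
    apply hp2
    rw [div_eq_div_iff (ne_of_gt hp0) two_ne_zero] at h
    have h2 : ((d:ℝ) - α) * p = ((d:ℝ) - α) * 2 := by linarith
    have := mul_left_cancel₀ (ne_of_gt hdα) h2
    linarith
  have hx : 0 < (β+α)/2 := by linarith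
  have hy : 0 < ((d:ℝ)-β)/2 := by linarith
  have hδ : 0 < 1 - α/2 := by linarith
  have hxy : (β+α)/2 ≠ ((d:ℝ)-β)/2 := by
    intro h
    apply hβne
    linarith
  have hcore := gamma_core ((β+α)/2) (((d:ℝ)-β)/2) (1-α/2) hx hy hδ hxy
  rw [show ((β+α)/2 + ((d:ℝ)-β)/2)/2 = ((d:ℝ)+α)/4 by ring] at hcore
  have g1 : Real.Gamma ((β+α)/2 + (1-α/2)) = (β/2) * Real.Gamma (β/2) := by
    rw [show (β+α)/2 + (1-α/2) = β/2 + 1 by ring, Real.Gamma_add_one (by positivity)]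
  have g2 : Real.Gamma (((d:ℝ)-β)/2 + (1-α/2))
      = (((d:ℝ)-β-α)/2) * Real.Gamma (((d:ℝ)-β-α)/2) := by
    rw [show ((d:ℝ)-β)/2 + (1-α/2) = ((d:ℝ)-β-α)/2 + 1 by ring,
      Real.Gamma_add_one (by intro h0; nlinarith)]
  have g3 : Real.Gamma (((d:ℝ)+α)/4 + (1-α/2))
      = (((d:ℝ)-α)/4) * Real.Gamma (((d:ℝ)-α)/4) := by
    rw [show ((d:ℝ)+α)/4 + (1-α/2) = ((d:ℝ)-α)/4 + 1 by ring,
      Real.Gamma_add_one (by positivity)]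
  rw [g1, g2, g3] at hcore
  have G1 : 0 < Real.Gamma ((β+α)/2) := Real.Gamma_pos_of_pos hx
  have G2 : 0 < Real.Gamma (((d:ℝ)-β)/2) := Real.Gamma_pos_of_pos hy
  have G3 : 0 < Real.Gamma (β/2) := Real.Gamma_pos_of_pos (by linarith)
  have G4 : 0 < Real.Gamma (((d:ℝ)-β-α)/2) := Real.Gamma_pos_of_pos (by linarith)
  have G5 : 0 < Real.Gamma (((d:ℝ)+α)/4) := Real.Gamma_pos_of_pos (by linarith)
  have G6 : 0 < Real.Gamma (((d:ℝ)-α)/4) := Real.Gamma_pos_of_pos (by linarith)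
  have h2α : (0:ℝ) < 2 ^ α := Real.rpow_pos_of_pos two_pos α
  have hscal : 4*(p-1)/p^2 * ((((d:ℝ)-α)/4)^2) = (β/2)*(((d:ℝ)-β-α)/2) := by
    rw [hβdef]
    field_simp
    ring
  have hq : (0:ℝ) < (((d:ℝ)-α)/4)^2 := by positivity
  have hcore2 : (4*(p-1)/p^2 * ((((d:ℝ)-α)/4)^2)) *
      (Real.Gamma (β/2) * Real.Gamma (((d:ℝ)-β-α)/2) * Real.Gamma (((d:ℝ)+α)/4)^2) <
      Real.Gamma ((β+α)/2) * Real.Gamma (((d:ℝ)-β)/2) *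
        ((((d:ℝ)-α)/4)^2 * Real.Gamma (((d:ℝ)-α)/4)^2) := by
    calc (4*(p-1)/p^2 * ((((d:ℝ)-α)/4)^2)) *
        (Real.Gamma (β/2) * Real.Gamma (((d:ℝ)-β-α)/2) * Real.Gamma (((d:ℝ)+α)/4)^2)
        = β/2 * Real.Gamma (β/2) * (((d:ℝ)-β-α)/2 * Real.Gamma (((d:ℝ)-β-α)/2)) *
            Real.Gamma (((d:ℝ)+α)/4)^2 := by rw [hscal]; ring
      _ < Real.Gamma ((β+α)/2) * Real.Gamma (((d:ℝ)-β)/2) *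
            (((d:ℝ)-α)/4 * Real.Gamma (((d:ℝ)-α)/4))^2 := hcore
      _ = Real.Gamma ((β+α)/2) * Real.Gamma (((d:ℝ)-β)/2) *
            ((((d:ℝ)-α)/4)^2 * Real.Gamma (((d:ℝ)-α)/4)^2) := by ring
  have step : 4*(p-1)/p^2 * (Real.Gamma (((d:ℝ)+α)/4))^2 *
      (Real.Gamma (β/2) * Real.Gamma (((d:ℝ)-β-α)/2)) <
      Real.Gamma ((β+α)/2) * Real.Gamma (((d:ℝ)-β)/2) * (Real.Gamma (((d:ℝ)-α)/4))^2 := by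
    nlinarith [hcore2, hq]
  unfold kappa
  rw [show (((d:ℝ)-α)/2 + α)/2 = ((d:ℝ)+α)/4 by ring,
    show ((d:ℝ) - ((d:ℝ)-α)/2)/2 = ((d:ℝ)+α)/4 by ring,
    show (((d:ℝ)-α)/2)/2 = ((d:ℝ)-α)/4 by ring,
    show ((d:ℝ) - ((d:ℝ)-α)/2 - α)/2 = ((d:ℝ)-α)/4 by ring]
  rw [mul_div_assoc', div_lt_div_iff₀ (by positivity) (by positivity)]
  linarith [mul_lt_mul_of_pos_left step h2α]
end

section
/- Let d ≥ 2 be a natural number and 1 < α < 2 a real number. Then (p/(d−α)) κ_{(d−α)/p} → ν⋆ as p → ∞, i.e. the function p ↦ (p/(d−α)) · 2^α Γ(((d−α)/p + α)/2) Γ((d − (d−α)/p)/2) / (Γ((d−α)/(2p)) Γ((d − (d−α)/p − α)/2)) tends to ν⋆ := 2^{α−1} Γ(α/2) Γ(d/2) / Γ((d−α)/2) as p → +∞. -/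
/-- `ν⋆ = 2^{α−1} Γ(α/2) Γ(d/2) / Γ((d−α)/2)`. -/
noncomputable def nuStar (d : ℕ) (α : ℝ) : ℝ :=
  2 ^ (α - 1) * Real.Gamma (α / 2) * Real.Gamma ((d : ℝ) / 2) /
    Real.Gamma (((d : ℝ) - α) / 2)

/-!
Since `β Γ(β/2) = 2 Γ(β/2 + 1)`, the quotient `κ_β / β` agrees for `β ≠ 0` with an expression
in which no Gamma factor is evaluated near a pole when `β` is near `0`. That expression is
continuous at `β = 0`, where its value is `ν⋆`; and `p/(d−α) κ_{(d−α)/p}` is `κ_β / β` at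
`β = (d−α)/p → 0`.
-/

open Filter Topology Real

lemma Real.continuousAt_Gamma_of_pos {x : ℝ} (hx : 0 < x) : ContinuousAt Gamma x :=
  differentiableOn_Gamma_Ioi.continuousOn.continuousAt (Ioi_mem_nhds hx)

/-- The continuous extension of `β ↦ κ_β / β` through `β = 0`. -/
noncomputable def kappaDivSelf (d : ℕ) (α β : ℝ) : ℝ :=
  2 ^ α * Gamma ((β + α) / 2) * Gamma (((d : ℝ) - β) / 2) /
    (2 * Gamma (β / 2 + 1) * Gamma (((d : ℝ) - β - α) / 2))

section KappaDivSelf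

variable {d : ℕ} {α β : ℝ}

lemma kappa_div_self_eq (hβ : β ≠ 0) : kappa d α β / β = kappaDivSelf d α β := by
  rw [kappa, kappaDivSelf, Gamma_add_one (div_ne_zero hβ two_ne_zero), div_div]
  congr 1
  ring

lemma kappaDivSelf_zero : kappaDivSelf d α 0 = nuStar d α := by
  have h2 : (2 : ℝ) ^ (α - 1) = 2 ^ α / 2 := by rw [rpow_sub two_pos, rpow_one]
  simp only [kappaDivSelf, nuStar, h2, zero_div, zero_add, sub_zero, Gamma_one, mul_one]
  ring

lemma continuousAt_kappaDivSelf_zero (hα : 0 < α) (hαd : α < d) :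
    ContinuousAt (kappaDivSelf d α) 0 := by
  have hΓ : ∀ f : ℝ → ℝ, Continuous f → 0 < f 0 → ContinuousAt (fun β => Gamma (f β)) 0 :=
    fun f hf hf0 => (continuousAt_Gamma_of_pos hf0).comp hf.continuousAt
  have hdα : 0 < (d : ℝ) - α := sub_pos.mpr hαd
  refine ContinuousAt.div ?_ ?_ ?_
  · exact (continuousAt_const.mul (hΓ _ (by fun_prop) (by simpa using hα))).mul
      (hΓ _ (by fun_prop) (by simpa using hα.trans hαd))
  · exact (continuousAt_const.mul (hΓ _ (by fun_prop) (by simp))).mul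
      (hΓ _ (by fun_prop) (by simpa using hdα))
  · have : 0 < Gamma (((d : ℝ) - α) / 2) := Gamma_pos_of_pos (by positivity)
    simp only [zero_div, zero_add, Gamma_one, sub_zero]
    positivity

lemma tendsto_kappa_div_self (hα : 0 < α) (hαd : α < d) :
    Tendsto (fun β => kappa d α β / β) (𝓝[≠] 0) (𝓝 (nuStar d α)) := by
  rw [← kappaDivSelf_zero]
  refine ((continuousAt_kappaDivSelf_zero hα hαd).tendsto.mono_left nhdsWithin_le_nhds).congr' ?_
  filter_upwards [self_mem_nhdsWithin] with β hβ
  exact (kappa_div_self_eq hβ).symm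

end KappaDivSelf

/-- `(p/(d−α)) κ_{(d−α)/p} → ν⋆` as `p → ∞`. -/
theorem stmt_8 (d : ℕ) (hd : 2 ≤ d) (α : ℝ) (hα1 : 1 < α) (hα2 : α < 2) :
    Filter.Tendsto (fun p : ℝ => p / ((d : ℝ) - α) * kappa d α (((d : ℝ) - α) / p))
      Filter.atTop (nhds (nuStar d α)) := by
  have hαd : α < d := hα2.trans_le (by exact_mod_cast hd)
  have hβ : Tendsto (fun p : ℝ => ((d : ℝ) - α) / p) atTop (𝓝[≠] 0) := by
    refine tendsto_nhdsWithin_iff.mpr ⟨tendsto_const_nhds.div_atTop tendsto_id, ?_⟩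
    filter_upwards [eventually_gt_atTop 0] with p hp
    exact div_ne_zero (sub_pos.mpr hαd).ne' hp.ne'
  refine ((tendsto_kappa_div_self (by linarith) hαd).comp hβ).congr fun p => ?_
  simp only [Function.comp_apply, div_eq_mul_inv _ (((d : ℝ) - α) / p), inv_div, mul_comm]
end

section
/- Let d ≥ 2 be a natural number and 1 < α < 2 a real number. Then ν_SV < ν⋆, i.e. (2^{α+2}/(d−α)) (Γ((d+α)/4)/Γ((d−α)/4))² < 2^{α−1} Γ(α/2) Γ(d/2) / Γ((d−α)/2). -/
/-!
With `a = (d - α) / 4` and `s = α / 2`, so that `a > 0` and `0 < s < 1`, the inequality reduces via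
`Γ(x + 1) = x Γ(x)` to `Γ(a + s)² Γ(2a + 1) < Γ(s) Γ(2a + s) Γ(a + 1)²`. Both sides are products
of four Gamma values whose arguments have the same sum, so Euler's limit formula
`Γ(x) = lim nˣ n! / ∏_{j ≤ n} (x + j)` expresses the ratio of the two sides as an infinite product
over `j` of polynomial ratios, and each factor exceeds `1` because the difference of the polynomials
is `a² (1 - s) (1 + s + 2a + 2j)`.
-/

open Filter Finset
open scoped Nat

namespace Real

variable {ι : Type*} [Fintype ι]

theorem prod_GammaSeq_eq (x : ι → ℝ) {n : ℕ} (hn : 0 < n) :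
    ∏ i, GammaSeq (x i) n =
      (n : ℝ) ^ (∑ i, x i) * (n ! : ℝ) ^ Fintype.card ι /
        ∏ j ∈ range (n + 1), ∏ i, (x i + j) := by
  simp only [GammaSeq]
  rw [prod_div_distrib, prod_mul_distrib, prod_comm (s := range (n + 1)),
    rpow_sum_of_pos (Nat.cast_pos.mpr hn), prod_const, card_univ]

theorem prod_Gamma_le_prod_Gamma {x y : ι → ℝ} (hx : ∀ i, 0 < x i)
    (hsum : ∑ i, x i = ∑ i, y i) (hle : ∀ j : ℕ, ∏ i, (x i + j) ≤ ∏ i, (y i + j)) :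
    ∏ i, Gamma (y i) ≤ ∏ i, Gamma (x i) := by
  have hseq : ∀ᶠ n in atTop, ∏ i, GammaSeq (y i) n ≤ ∏ i, GammaSeq (x i) n := by
    filter_upwards [eventually_gt_atTop 0] with n hn
    rw [prod_GammaSeq_eq x hn, prod_GammaSeq_eq y hn, hsum]
    have hxpos : ∀ j : ℕ, 0 < ∏ i, (x i + j) :=
      fun j => prod_pos fun i _ => add_pos_of_pos_of_nonneg (hx i) (Nat.cast_nonneg j)
    exact div_le_div_of_nonneg_left (by positivity) (prod_pos fun j _ => hxpos j)
      (prod_le_prod (fun j _ => (hxpos j).le) fun j _ => hle j)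
  exact le_of_tendsto_of_tendsto
    (tendsto_finsetProd _ fun i _ => GammaSeq_tendsto_Gamma (y i))
    (tendsto_finsetProd _ fun i _ => GammaSeq_tendsto_Gamma (x i)) hseq

theorem prod_Gamma_lt_prod_Gamma {x y : ι → ℝ} (hx : ∀ i, 0 < x i) (hy : ∀ i, 0 < y i)
    (hsum : ∑ i, x i = ∑ i, y i) (hle : ∀ j : ℕ, ∏ i, (x i + j) ≤ ∏ i, (y i + j))
    (hlt : ∏ i, x i < ∏ i, y i) :
    ∏ i, Gamma (y i) < ∏ i, Gamma (x i) := by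
  -- shifting the arguments by `1` splits off the `j = 0` factors `∏ x i` and `∏ y i`
  have hshift : ∏ i, Gamma (y i + 1) ≤ ∏ i, Gamma (x i + 1) := by
    refine prod_Gamma_le_prod_Gamma (fun i => by linarith [hx i]) ?_ fun j => ?_
    · simp only [sum_add_distrib, hsum]
    · simpa only [Nat.cast_succ, add_assoc, add_comm (1 : ℝ)] using hle (j + 1)
  simp only [Gamma_add_one (hx _).ne', Gamma_add_one (hy _).ne', prod_mul_distrib] at hshift
  have hGx : 0 < ∏ i, Gamma (x i) := prod_pos fun i _ => Gamma_pos_of_pos (hx i)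
  exact lt_of_mul_lt_mul_left (hshift.trans_lt (mul_lt_mul_of_pos_right hlt hGx))
    (prod_pos fun i _ => hy i).le

end Real

lemma mul_mul_sq_lt_mul_mul_sq {a s u : ℝ} (ha : 0 < a) (hs0 : 0 < s) (hs1 : s < 1)
    (hu : 0 ≤ u) :
    (s + u) * (2 * a + s + u) * (a + 1 + u) ^ 2 < (1 + u) * (2 * a + 1 + u) * (a + s + u) ^ 2 := by
  have hdiff : (1 + u) * (2 * a + 1 + u) * (a + s + u) ^ 2 -
      (s + u) * (2 * a + s + u) * (a + 1 + u) ^ 2 = a ^ 2 * (1 - s) * (1 + s + 2 * a + 2 * u) := by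
    ring
  have : 0 < a ^ 2 * (1 - s) * (1 + s + 2 * a + 2 * u) := by
    have : 0 < 1 - s := by linarith
    positivity
  linarith

lemma two_mul_Gamma_sq_mul_Gamma_lt {a s : ℝ} (ha : 0 < a) (hs0 : 0 < s) (hs1 : s < 1) :
    2 * Real.Gamma (a + s) ^ 2 * Real.Gamma (2 * a) <
      a * Real.Gamma a ^ 2 * (Real.Gamma s * Real.Gamma (2 * a + s)) := by
  have h := Real.prod_Gamma_lt_prod_Gamma (x := ![s, 2 * a + s, a + 1, a + 1])
    (y := ![1, 2 * a + 1, a + s, a + s])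
    (by intro i; fin_cases i <;> simp <;> linarith)
    (by intro i; fin_cases i <;> simp <;> linarith)
    (by simp [Fin.sum_univ_four]; ring)
    (fun j => by
      simpa [Fin.prod_univ_four, mul_assoc, sq] using
        (mul_mul_sq_lt_mul_mul_sq ha hs0 hs1 (Nat.cast_nonneg j)).le)
    (by simpa [Fin.prod_univ_four, mul_assoc, sq] using mul_mul_sq_lt_mul_mul_sq ha hs0 hs1 le_rfl)
  simp only [Fin.prod_univ_four, Matrix.cons_val, Real.Gamma_one, one_mul,
    Real.Gamma_add_one (by positivity : 2 * a ≠ 0), Real.Gamma_add_one ha.ne'] at h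
  exact lt_of_mul_lt_mul_left (by linear_combination h) ha.le

/-- `ν_SV < ν⋆`, i.e.
`(2^{α+2}/(d−α)) (Γ((d+α)/4)/Γ((d−α)/4))² < 2^{α−1} Γ(α/2) Γ(d/2) / Γ((d−α)/2)`. -/
theorem stmt_9 (d : ℕ) (hd : 2 ≤ d) (α : ℝ) (hα1 : 1 < α) (hα2 : α < 2) :
    2 ^ (α + 2) / ((d : ℝ) - α) *
        (Real.Gamma (((d : ℝ) + α) / 4) / Real.Gamma (((d : ℝ) - α) / 4)) ^ 2 <
      2 ^ (α - 1) * Real.Gamma (α / 2) * Real.Gamma ((d : ℝ) / 2) /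
        Real.Gamma (((d : ℝ) - α) / 2) := by
  have hd2 : (2 : ℝ) ≤ d := by exact_mod_cast hd
  set a : ℝ := ((d : ℝ) - α) / 4 with ha_def
  set s : ℝ := α / 2 with hs_def
  have ha : 0 < a := by linarith
  have hkey := two_mul_Gamma_sq_mul_Gamma_lt ha (by linarith : 0 < s) (by linarith : s < 1)
  rw [show ((d : ℝ) + α) / 4 = a + s by ring, show (d : ℝ) / 2 = 2 * a + s by ring,
    show ((d : ℝ) - α) / 2 = 2 * a by ring, show (d : ℝ) - α = 4 * a by ring,
    show α + 2 = (α - 1) + 3 by ring, Real.rpow_add two_pos]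
  have hG2a := Real.Gamma_pos_of_pos (by positivity : 0 < 2 * a)
  rw [div_pow, div_mul_div_comm, div_lt_div_iff₀ (by positivity) hG2a]
  linear_combination (4 * 2 ^ (α - 1) : ℝ) * hkey
end

section
/- For all real numbers t, s ≥ 0, one has (t − s)(sinh t − sinh s) ≥ 4 (sinh(t/2) − sinh(s/2))². Equivalently, with φ(u) = e^u − e^{−u}, G(u) = e^{u/2} − e^{−u/2} and c_φ = 2: c_φ^{−1}(t−s)(φ(t)−φ(s)) ≥ (G(t)−G(s))². -/
private lemma sinh_le_mul_cosh {d : ℝ} (hd : 0 ≤ d) : Real.sinh d ≤ d * Real.cosh d := by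
  have h : MonotoneOn (fun x : ℝ => x * Real.cosh x - Real.sinh x) (Set.Ici 0) := by
    apply monotoneOn_of_deriv_nonneg (convex_Ici 0)
    · exact (continuous_id.mul Real.continuous_cosh).sub Real.continuous_sinh |>.continuousOn
    · intro x _
      exact (((hasDerivAt_id x).mul (Real.hasDerivAt_cosh x)).sub
        (Real.hasDerivAt_sinh x)).differentiableAt.differentiableWithinAt
    · intro x hx
      have hx' : 0 < x := by simpa using hx
      have H : HasDerivAt (fun x : ℝ => x * Real.cosh x - Real.sinh x)
          (1 * Real.cosh x + x * Real.sinh x - Real.cosh x) x :=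
        ((hasDerivAt_id x).mul (Real.hasDerivAt_cosh x)).sub (Real.hasDerivAt_sinh x)
      rw [H.deriv]
      have hs : 0 ≤ Real.sinh x := by
        rw [Real.sinh_nonneg_iff]; exact hx'.le
      nlinarith [mul_nonneg hx'.le hs]
  have h0 : (0 : ℝ) ∈ Set.Ici (0 : ℝ) := Set.self_mem_Ici
  have hd' : d ∈ Set.Ici (0 : ℝ) := hd
  have := h h0 hd' hd
  simp only [Real.sinh_zero, Real.cosh_zero] at this
  linarith

private lemma sinh_sq_le (d : ℝ) :
    Real.sinh d ^ 2 ≤ d * Real.sinh d * Real.cosh d := by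
  rcases le_total 0 d with hd | hd
  · have h := sinh_le_mul_cosh hd
    have hs : 0 ≤ Real.sinh d := by rw [Real.sinh_nonneg_iff]; exact hd
    nlinarith
  · have h := sinh_le_mul_cosh (neg_nonneg.mpr hd)
    rw [Real.sinh_neg, Real.cosh_neg] at h
    have hs : Real.sinh d ≤ 0 := by rw [Real.sinh_nonpos_iff]; exact hd
    nlinarith

/-- For all `t, s ≥ 0`: `(t − s)(sinh t − sinh s) ≥ 4 (sinh(t/2) − sinh(s/2))²`. -/
theorem stmt_13 (t s : ℝ) (ht : 0 ≤ t) (hs : 0 ≤ s) :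
    4 * (Real.sinh (t / 2) - Real.sinh (s / 2)) ^ 2 ≤
      (t - s) * (Real.sinh t - Real.sinh s) := by
  have h1 : ∀ x y : ℝ, Real.sinh (x + y) - Real.sinh (x - y) = 2 * Real.cosh x * Real.sinh y := by
    intro x y; rw [Real.sinh_add, Real.sinh_sub]; ring
  have hA : Real.sinh t - Real.sinh s =
      2 * Real.cosh ((t + s) / 2) * Real.sinh ((t - s) / 2) := by
    have := h1 ((t + s) / 2) ((t - s) / 2)
    rw [show (t + s) / 2 + (t - s) / 2 = t by ring,
        show (t + s) / 2 - (t - s) / 2 = s by ring] at this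
    exact this
  have hB : Real.sinh (t / 2) - Real.sinh (s / 2) =
      2 * Real.cosh ((t + s) / 4) * Real.sinh ((t - s) / 4) := by
    have := h1 ((t + s) / 4) ((t - s) / 4)
    rw [show (t + s) / 4 + (t - s) / 4 = t / 2 by ring,
        show (t + s) / 4 - (t - s) / 4 = s / 2 by ring] at this
    exact this
  have hsinh2 : Real.sinh ((t - s) / 2) =
      2 * Real.sinh ((t - s) / 4) * Real.cosh ((t - s) / 4) := by
    rw [show (t - s) / 2 = 2 * ((t - s) / 4) by ring, Real.sinh_two_mul]
  have hcosh2 : Real.cosh ((t + s) / 2) =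
      2 * Real.cosh ((t + s) / 4) ^ 2 - 1 := by
    rw [show (t + s) / 2 = 2 * ((t + s) / 4) by ring, Real.cosh_two_mul,
        Real.cosh_sq ((t + s) / 4)]
    ring
  rw [hA, hB, hsinh2, hcosh2]
  set S := Real.sinh ((t - s) / 4)
  set c := Real.cosh ((t - s) / 4)
  set C := Real.cosh ((t + s) / 4)
  have hkey := sinh_sq_le ((t - s) / 4)
  have hC : 1 ≤ C := Real.one_le_cosh _
  have h2 : 0 ≤ S ^ 2 * (C ^ 2 - 1) := mul_nonneg (sq_nonneg S) (by nlinarith)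
  have h3 : 0 ≤ ((t - s) / 4 * S * c - S ^ 2) * (2 * C ^ 2 - 1) :=
    mul_nonneg (by linarith) (by nlinarith)
  nlinarith [h2, h3]
end
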